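/- Let ℓ: ℝ → ℝ be a gradient-symmetric function with constant c (ℓ'(v)+ℓ'(−v)=c), and write its even part ℓ_e(v) = (ℓ(v)+ℓ(−v))/2. Then for any random variable F with mean f* = E[F], E[B_ℓ(F, f*)] = E[ℓ_e(F)] − ℓ_e(f*). -/

import Mathlib

/-! Gradient symmetry says that `v ↦ ℓ v - ℓ (-v) - c v` has zero derivative, so it vanishes
identically and the even part is `ℓ_e v = ℓ v - (c/2) v`. Since `f* = E[F]`, the linear parts
cancel in `E[ℓ_e(F)] - ℓ_e(f*)`, and the linear term of `B_ℓ(F, f*)` has mean zero; both sides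
therefore equal `E[ℓ(F)] - ℓ(f*)`. -/

open MeasureTheory

theorem neg_eq_sub_mul_of_deriv_add_deriv_neg {ℓ : ℝ → ℝ} (hd : Differentiable ℝ ℓ) {c : ℝ}
    (hgs : ∀ v, deriv ℓ v + deriv ℓ (-v) = c) (v : ℝ) : ℓ (-v) = ℓ v - c * v := by
  set g : ℝ → ℝ := fun v => ℓ v - ℓ (-v) - c * v
  have hg_deriv : ∀ x, HasDerivAt g 0 x := by
    intro x
    have h : HasDerivAt g (deriv ℓ x - deriv ℓ (-x) * -1 - c * 1) x :=
      ((hd x).hasDerivAt.sub ((hd (-x)).hasDerivAt.comp x (hasDerivAt_neg x))).sub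
        ((hasDerivAt_id x).const_mul c)
    rwa [show deriv ℓ x - deriv ℓ (-x) * -1 - c * 1 = 0 by linarith [hgs x]] at h
  have hg_const := is_const_of_deriv_eq_zero (fun x => (hg_deriv x).differentiableAt)
    (fun x => (hg_deriv x).deriv) v 0
  simp only [g, neg_zero, sub_self, mul_zero] at hg_const
  linarith

theorem even_part_eq_sub_mul_of_deriv_add_deriv_neg {ℓ : ℝ → ℝ} (hd : Differentiable ℝ ℓ)
    {c : ℝ} (hgs : ∀ v, deriv ℓ v + deriv ℓ (-v) = c) (v : ℝ) :
    (ℓ v + ℓ (-v)) / 2 = ℓ v - c / 2 * v := by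
  rw [neg_eq_sub_mul_of_deriv_add_deriv_neg hd hgs v]
  ring

section Integral

variable {Ω : Type*} [MeasurableSpace Ω] {μ : Measure Ω} [IsProbabilityMeasure μ]
  {F g : Ω → ℝ}

theorem integral_sub_const_sub_mul_sub_integral (hF : Integrable F μ) (hg : Integrable g μ)
    (b a : ℝ) :
    ∫ ω, (g ω - b - a * (F ω - ∫ ω', F ω' ∂μ)) ∂μ = (∫ ω, g ω ∂μ) - b := by
  have hcentered : ∫ ω, a * (F ω - ∫ ω', F ω' ∂μ) ∂μ = 0 := by
    rw [integral_const_mul, integral_sub hF (integrable_const _), integral_const, probReal_univ,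
      one_smul, sub_self, mul_zero]
  have hg_sub : Integrable (fun ω => g ω - b) μ := hg.sub (integrable_const b)
  have hF_sub : Integrable (fun ω => a * (F ω - ∫ ω', F ω' ∂μ)) μ :=
    (hF.sub (integrable_const _)).const_mul a
  rw [integral_sub hg_sub hF_sub, hcentered, integral_sub hg (integrable_const b), integral_const, probReal_univ, one_smul,
    sub_zero]

end Integral

theorem stmt16_general {Ω : Type*} [MeasurableSpace Ω] (μ : Measure Ω) [IsProbabilityMeasure μ]
    (ℓ : ℝ → ℝ) (hd : Differentiable ℝ ℓ)
    (c : ℝ) (hgs : ∀ v : ℝ, deriv ℓ v + deriv ℓ (-v) = c)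
    (F : Ω → ℝ) (hF : Integrable F μ)
    (h1 : Integrable (fun ω => ℓ (F ω)) μ) :
    ∫ ω, (ℓ (F ω) - ℓ (∫ ω', F ω' ∂μ)
        - deriv ℓ (∫ ω', F ω' ∂μ) * (F ω - ∫ ω', F ω' ∂μ)) ∂μ =
      (∫ ω, (ℓ (F ω) + ℓ (-F ω)) / 2 ∂μ)
        - (ℓ (∫ ω', F ω' ∂μ) + ℓ (-(∫ ω', F ω' ∂μ))) / 2 := by
  have hbregman := integral_sub_const_sub_mul_sub_integral hF h1 (ℓ (∫ ω', F ω' ∂μ))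
    (deriv ℓ (∫ ω', F ω' ∂μ))
  have heven : ∫ ω, (ℓ (F ω) + ℓ (-F ω)) / 2 ∂μ = (∫ ω, ℓ (F ω) ∂μ) - c / 2 * ∫ ω, F ω ∂μ := by
    simp_rw [even_part_eq_sub_mul_of_deriv_add_deriv_neg hd hgs]
    rw [integral_sub h1 (hF.const_mul _), integral_const_mul]
  rw [hbregman, heven, even_part_eq_sub_mul_of_deriv_add_deriv_neg hd hgs]
  ring

/-- Variance of a gradient-symmetric loss as a Jensen gap of the even part. -/
theorem stmt16 {Ω : Type*} [MeasurableSpace Ω] (μ : Measure Ω) [IsProbabilityMeasure μ]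
    (ℓ : ℝ → ℝ) (hd : Differentiable ℝ ℓ)
    (c : ℝ) (hgs : ∀ v : ℝ, deriv ℓ v + deriv ℓ (-v) = c)
    (F : Ω → ℝ) (hF : Integrable F μ)
    (h1 : Integrable (fun ω => ℓ (F ω)) μ)
    (h2 : Integrable (fun ω => ℓ (-F ω)) μ) :
    ∫ ω, (ℓ (F ω) - ℓ (∫ ω', F ω' ∂μ)
        - deriv ℓ (∫ ω', F ω' ∂μ) * (F ω - ∫ ω', F ω' ∂μ)) ∂μ =
      (∫ ω, (ℓ (F ω) + ℓ (-F ω)) / 2 ∂μ)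
        - (ℓ (∫ ω', F ω' ∂μ) + ℓ (-(∫ ω', F ω' ∂μ))) / 2 :=
  stmt16_general μ ℓ hd c hgs F hF h1
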